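/- Let {Y(t)} be a gamma subordinator, 0 < β < 1, and s > 0 fixed. Then lim_{t→∞} β E[Y(t)^{2β} B(β, 1+β; Y(s)/Y(t))] / E[Y(s)^β Y(t)^β] = 1. -/

import Mathlib

open Real MeasureTheory ProbabilityTheory Filter

/-- The incomplete Beta function `B(a,b;x) = ∫_0^x u^(a-1) (1-u)^(b-1) du`. -/
noncomputable def incBeta (a b x : ℝ) : ℝ :=
  ∫ u in (0:ℝ)..x, u ^ (a - 1) * (1 - u) ^ (b - 1)

/-
Since `1 ≤ u ^ β + (1 - u) ^ β` on `[0, 1]`, the integrand `u ^ (β - 1) (1 - u) ^ β` of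
`B(β, 1 + β; x)` lies between `u ^ (β - 1) - u ^ (2β - 1)` and `u ^ (β - 1)`. Taking
`x = Y(s) / Y(t)` this sandwiches the numerator:
`E[Y(s)^β Y(t)^β] - E[Y(s)^(2β)] / 2 ≤ β E[Y(t)^(2β) B(β, 1 + β; Y(s)/Y(t))] ≤ E[Y(s)^β Y(t)^β]`,
so it suffices that the denominator tends to infinity. Since `Y(t) ≥ Y(t) - Y(s)` and the increment
is independent of `Y(s)` with the law of `Y(t - s)`, the denominator is at least
`E[Y(s)^β] Γ(a + β) / (Γ(a) α^β)` with `a = p (t - s)`, and log-convexity of `Γ` gives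
`Γ(a + β) / Γ(a) ≥ (a + β - 1)^β → ∞`.
-/

section IncBeta

variable {a b β x : ℝ}

lemma integral_rpow_sub_one (ha : 0 < a) (x : ℝ) :
    ∫ u in (0:ℝ)..x, u ^ (a - 1) = x ^ a / a := by
  rw [integral_rpow (Or.inl (by linarith)), sub_add_cancel, zero_rpow ha.ne', sub_zero]

lemma intervalIntegrable_incBeta_integrand (ha : 0 < a) (hb : 1 ≤ b) (c d : ℝ) :
    IntervalIntegrable (fun u : ℝ => u ^ (a - 1) * (1 - u) ^ (b - 1)) volume c d :=
  (intervalIntegral.intervalIntegrable_rpow' (by linarith)).mul_continuousOn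
    ((continuous_const.sub continuous_id).rpow_const fun _ => Or.inr (by linarith)).continuousOn

lemma continuous_incBeta (ha : 0 < a) (hb : 1 ≤ b) : Continuous (incBeta a b) :=
  intervalIntegral.continuous_primitive (intervalIntegrable_incBeta_integrand ha hb) 0

lemma incBeta_nonneg (hx0 : 0 ≤ x) (hx1 : x ≤ 1) : 0 ≤ incBeta a b x :=
  intervalIntegral.integral_nonneg hx0 fun u hu =>
    mul_nonneg (rpow_nonneg hu.1 _) (rpow_nonneg (by linarith [hu.2]) _)

lemma incBeta_le_rpow_div (ha : 0 < a) (hb : 1 ≤ b) (hx0 : 0 ≤ x) (hx1 : x ≤ 1) :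
    incBeta a b x ≤ x ^ a / a := by
  rw [incBeta, ← integral_rpow_sub_one ha]
  refine intervalIntegral.integral_mono_on_of_le_Ioo hx0
    (intervalIntegrable_incBeta_integrand ha hb 0 x)
    (intervalIntegral.intervalIntegrable_rpow' (by linarith)) fun u hu => ?_
  have h1u : (1 - u) ^ (b - 1) ≤ 1 :=
    rpow_le_one (by linarith [hu.2]) (by linarith [hu.1]) (by linarith)
  simpa using mul_le_mul_of_nonneg_left h1u (rpow_nonneg hu.1.le (a - 1))

lemma rpow_div_sub_le_incBeta (hβ0 : 0 < β) (hβ1 : β ≤ 1) (hx0 : 0 ≤ x) (hx1 : x ≤ 1) :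
    x ^ β / β - x ^ (2 * β) / (2 * β) ≤ incBeta β (1 + β) x := by
  rw [← integral_rpow_sub_one hβ0, ← integral_rpow_sub_one (by linarith : 0 < 2 * β),
    ← intervalIntegral.integral_sub (intervalIntegral.intervalIntegrable_rpow' (by linarith))
      (intervalIntegral.intervalIntegrable_rpow' (by linarith)), incBeta]
  refine intervalIntegral.integral_mono_on_of_le_Ioo hx0
    ((intervalIntegral.intervalIntegrable_rpow' (by linarith)).sub
      (intervalIntegral.intervalIntegrable_rpow' (by linarith)))
    (intervalIntegrable_incBeta_integrand hβ0 (by linarith) 0 x) fun u hu => ?_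
  have hu0 : 0 < u := hu.1
  have hsub : 1 - u ^ β ≤ (1 - u) ^ β := by
    have := rpow_add_le_add_rpow hu0.le (by linarith [hu.2] : 0 ≤ 1 - u) hβ0.le hβ1
    rw [add_sub_cancel, one_rpow] at this
    linarith
  calc u ^ (β - 1) - u ^ (2 * β - 1) = u ^ (β - 1) * (1 - u ^ β) := by
        rw [mul_sub, mul_one, ← rpow_add hu0]; ring_nf
    _ ≤ u ^ (β - 1) * (1 - u) ^ (1 + β - 1) := by
        rw [add_sub_cancel_left]; exact mul_le_mul_of_nonneg_left hsub (rpow_nonneg hu0.le _)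

end IncBeta

section Pointwise

variable {β x y : ℝ}

lemma rpow_two_mul_eq_sq (hy : 0 ≤ y) : y ^ (2 * β) = (y ^ β) ^ 2 := by
  rw [mul_comm, rpow_mul hy, rpow_two]

lemma rpow_mul_rpow_le_rpow_two_mul (hβ : 0 ≤ β) (hx : 0 ≤ x) (hxy : x ≤ y) :
    x ^ β * y ^ β ≤ y ^ (2 * β) := by
  rw [rpow_two_mul_eq_sq (hx.trans hxy), sq]
  exact mul_le_mul_of_nonneg_right (rpow_le_rpow hx hxy hβ) (rpow_nonneg (hx.trans hxy) β)

lemma mul_rpow_mul_incBeta_div_le (hβ : 0 < β) (hx : 0 < x) (hxy : x ≤ y) :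
    β * (y ^ (2 * β) * incBeta β (1 + β) (x / y)) ≤ x ^ β * y ^ β := by
  have hy : 0 < y := hx.trans_le hxy
  calc β * (y ^ (2 * β) * incBeta β (1 + β) (x / y))
      ≤ β * (y ^ (2 * β) * ((x / y) ^ β / β)) := by
        gcongr
        exact incBeta_le_rpow_div hβ (by linarith) (by positivity) (div_le_one_of_le₀ hxy hy.le)
    _ = x ^ β * y ^ β := by
        have : 0 < y ^ β := by positivity
        rw [div_rpow hx.le hy.le, rpow_two_mul_eq_sq hy.le]
        field_simp

lemma sub_le_mul_rpow_mul_incBeta_div (hβ0 : 0 < β) (hβ1 : β ≤ 1) (hx : 0 < x) (hxy : x ≤ y) :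
    x ^ β * y ^ β - x ^ (2 * β) / 2 ≤ β * (y ^ (2 * β) * incBeta β (1 + β) (x / y)) := by
  have hy : 0 < y := hx.trans_le hxy
  calc x ^ β * y ^ β - x ^ (2 * β) / 2
      = β * (y ^ (2 * β) * ((x / y) ^ β / β - (x / y) ^ (2 * β) / (2 * β))) := by
        have : 0 < y ^ β := by positivity
        rw [div_rpow hx.le hy.le, div_rpow hx.le hy.le, rpow_two_mul_eq_sq hy.le,
          rpow_two_mul_eq_sq hx.le]
        field_simp
    _ ≤ β * (y ^ (2 * β) * incBeta β (1 + β) (x / y)) := by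
        gcongr
        exact rpow_div_sub_le_incBeta hβ0 hβ1 (by positivity) (div_le_one_of_le₀ hxy hy.le)

end Pointwise

section Expectations

variable {Ω : Type*} [MeasurableSpace Ω] {μ : Measure Ω} {X W Z : Ω → ℝ} {β : ℝ}

lemma integrable_rpow_mul_rpow (hX : Measurable X) (hZ : Measurable Z) (hβ : 0 ≤ β)
    (hXZ : ∀ᵐ ω ∂μ, 0 ≤ X ω ∧ X ω ≤ Z ω) (hint : Integrable (fun ω => Z ω ^ (2 * β)) μ) :
    Integrable (fun ω => X ω ^ β * Z ω ^ β) μ := by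
  refine hint.mono' ((hX.pow_const β).mul (hZ.pow_const β)).aestronglyMeasurable ?_
  filter_upwards [hXZ] with ω ⟨hX0, hXZ⟩
  rw [norm_of_nonneg (mul_nonneg (rpow_nonneg hX0 β) (rpow_nonneg (hX0.trans hXZ) β))]
  exact rpow_mul_rpow_le_rpow_two_mul hβ hX0 hXZ

lemma integrable_rpow_mul_incBeta_div (hX : Measurable X) (hZ : Measurable Z) (hβ : 0 < β)
    (hXZ : ∀ᵐ ω ∂μ, 0 < X ω ∧ X ω ≤ Z ω) (hint : Integrable (fun ω => Z ω ^ (2 * β)) μ) :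
    Integrable (fun ω => Z ω ^ (2 * β) * incBeta β (1 + β) (X ω / Z ω)) μ := by
  refine (hint.const_mul β⁻¹).mono' ((hZ.pow_const _).mul
    ((continuous_incBeta hβ (by linarith)).measurable.comp (hX.div hZ))).aestronglyMeasurable ?_
  filter_upwards [hXZ] with ω ⟨hX0, hXZ⟩
  have hZ0 : 0 < Z ω := hX0.trans_le hXZ
  rw [norm_of_nonneg (mul_nonneg (by positivity)
    (incBeta_nonneg (by positivity) (div_le_one_of_le₀ hXZ hZ0.le))), le_inv_mul_iff₀ hβ]
  exact (mul_rpow_mul_incBeta_div_le hβ hX0 hXZ).trans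
    (rpow_mul_rpow_le_rpow_two_mul hβ.le hX0.le hXZ)

lemma integral_rpow_mul_incBeta_div_mem (hX : Measurable X) (hZ : Measurable Z) (hβ0 : 0 < β)
    (hβ1 : β ≤ 1) (hXZ : ∀ᵐ ω ∂μ, 0 < X ω ∧ X ω ≤ Z ω)
    (hint : Integrable (fun ω => Z ω ^ (2 * β)) μ) :
    β * ∫ ω, Z ω ^ (2 * β) * incBeta β (1 + β) (X ω / Z ω) ∂μ ∈
      Set.Icc ((∫ ω, X ω ^ β * Z ω ^ β ∂μ) - (∫ ω, X ω ^ (2 * β) ∂μ) / 2)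
        (∫ ω, X ω ^ β * Z ω ^ β ∂μ) := by
  have hXZ' : ∀ᵐ ω ∂μ, 0 ≤ X ω ∧ X ω ≤ Z ω := hXZ.mono fun _ h => ⟨h.1.le, h.2⟩
  have hprod := integrable_rpow_mul_rpow hX hZ hβ0.le hXZ' hint
  have hinc := (integrable_rpow_mul_incBeta_div hX hZ hβ0 hXZ hint).const_mul β
  have hX2 : Integrable (fun ω => X ω ^ (2 * β) / 2) μ := by
    refine (hint.div_const 2).mono' ((hX.pow_const _).div_const 2).aestronglyMeasurable ?_
    filter_upwards [hXZ'] with ω ⟨hX0, hXZ⟩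
    rw [norm_of_nonneg (by positivity)]
    gcongr
  rw [← integral_const_mul, ← integral_div, ← integral_sub hprod hX2]
  exact ⟨integral_mono_ae (hprod.sub hX2) hinc (hXZ.mono fun _ h =>
      sub_le_mul_rpow_mul_incBeta_div hβ0 hβ1 h.1 h.2),
    integral_mono_ae hinc hprod (hXZ.mono fun _ h => mul_rpow_mul_incBeta_div_le hβ0 h.1 h.2)⟩

lemma integral_rpow_mul_integral_rpow_le (hX : Measurable X) (hW : Measurable W) (hβ : 0 ≤ β)
    (hXW : IndepFun X W μ) (hle : ∀ᵐ ω ∂μ, 0 ≤ X ω ∧ 0 ≤ W ω ∧ W ω ≤ Z ω)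
    (hint : Integrable (fun ω => X ω ^ β * Z ω ^ β) μ) :
    (∫ ω, X ω ^ β ∂μ) * (∫ ω, W ω ^ β ∂μ) ≤ ∫ ω, X ω ^ β * Z ω ^ β ∂μ := by
  have hmeas : Measurable fun x : ℝ => x ^ β := measurable_id.pow_const β
  have hprod : ∫ ω, X ω ^ β * W ω ^ β ∂μ = (∫ ω, X ω ^ β ∂μ) * (∫ ω, W ω ^ β ∂μ) :=
    (hXW.comp hmeas hmeas).integral_fun_mul_eq_mul_integral
      (hmeas.comp hX).aestronglyMeasurable (hmeas.comp hW).aestronglyMeasurable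
  rw [← hprod]
  refine integral_mono_of_nonneg ?_ hint ?_ <;> filter_upwards [hle] with ω ⟨hX0, hW0, hWZ⟩
  · exact mul_nonneg (rpow_nonneg hX0 β) (rpow_nonneg hW0 β)
  · exact mul_le_mul_of_nonneg_left (rpow_le_rpow hW0 hWZ hβ) (rpow_nonneg hX0 β)

end Expectations

section GammaMoments

variable {a r q β : ℝ}

lemma gammaPDF_mul_ofReal_rpow (ha : 0 < a) (hr : 0 < r) (hq : 0 < q) {x : ℝ} (hx : x ≠ 0) :
    gammaPDF a r x * ENNReal.ofReal (x ^ q) =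
      ENNReal.ofReal (Gamma (a + q) / (Gamma a * r ^ q)) * gammaPDF (a + q) r x := by
  rcases hx.lt_or_gt with hx | hx
  · simp [gammaPDF_of_neg hx]
  · rw [gammaPDF_of_nonneg hx.le, gammaPDF_of_nonneg hx.le,
      ← ENNReal.ofReal_mul (by positivity), ← ENNReal.ofReal_mul (by positivity)]
    have : 0 < Gamma (a + q) := Gamma_pos_of_pos (by linarith)
    have : 0 < Gamma a := Gamma_pos_of_pos ha
    congr 1
    rw [rpow_add hr, rpow_sub_one hx.ne', rpow_sub_one hx.ne', rpow_add hx]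
    field_simp

lemma lintegral_ofReal_rpow_gammaMeasure (ha : 0 < a) (hr : 0 < r) (hq : 0 < q) :
    ∫⁻ x, ENNReal.ofReal (x ^ q) ∂gammaMeasure a r =
      ENNReal.ofReal (Gamma (a + q) / (Gamma a * r ^ q)) := by
  have hpdf (b : ℝ) : Measurable (gammaPDF b r) := (measurable_gammaPDFReal b r).ennreal_ofReal
  rw [gammaMeasure, lintegral_withDensity_eq_lintegral_mul _ (hpdf a)
      (measurable_id'.pow_const q).ennreal_ofReal]
  simp only [Pi.mul_apply]
  rw [lintegral_congr_ae ((Measure.ae_ne volume 0).mono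
      fun x hx => gammaPDF_mul_ofReal_rpow ha hr hq hx),
    lintegral_const_mul _ (hpdf _), lintegral_gammaPDF_eq_one (by linarith) hr, mul_one]

lemma ae_pos_gammaMeasure (a r : ℝ) : ∀ᵐ x ∂gammaMeasure a r, 0 < x := by
  rw [ae_iff]
  simp only [not_lt]
  change gammaMeasure a r (Set.Iic 0) = 0
  rw [gammaMeasure, withDensity_apply _ measurableSet_Iic,
    Measure.restrict_congr_set Iio_ae_eq_Iic.symm]
  exact lintegral_gammaPDF_of_nonpos le_rfl

lemma integrable_rpow_gammaMeasure (ha : 0 < a) (hr : 0 < r) (hq : 0 < q) :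
    Integrable (fun x : ℝ => x ^ q) (gammaMeasure a r) := by
  refine ⟨(measurable_id'.pow_const q).aestronglyMeasurable, ?_⟩
  rw [hasFiniteIntegral_iff_ofReal ((ae_pos_gammaMeasure a r).mono fun x hx => by positivity),
    lintegral_ofReal_rpow_gammaMeasure ha hr hq]
  exact ENNReal.ofReal_lt_top

lemma integral_rpow_gammaMeasure (ha : 0 < a) (hr : 0 < r) (hq : 0 < q) :
    ∫ x, x ^ q ∂gammaMeasure a r = Gamma (a + q) / (Gamma a * r ^ q) := by
  have : 0 < Gamma (a + q) := Gamma_pos_of_pos (by linarith)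
  have : 0 < Gamma a := Gamma_pos_of_pos ha
  rw [integral_eq_lintegral_of_nonneg_ae
      ((ae_pos_gammaMeasure a r).mono fun x hx => by positivity)
      (measurable_id'.pow_const q).aestronglyMeasurable,
    lintegral_ofReal_rpow_gammaMeasure ha hr hq, ENNReal.toReal_ofReal (by positivity)]

/-- Log-convexity of `Gamma` at `a = β (a + β - 1) + (1 - β) (a + β)`. -/
lemma rpow_mul_Gamma_le_Gamma_add (hβ0 : 0 < β) (hβ1 : β < 1) (ha : 1 - β < a) :
    (a + β - 1) ^ β * Gamma a ≤ Gamma (a + β) := by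
  have hc : 0 < a + β - 1 := by linarith
  have hrec : Gamma (a + β) = (a + β - 1) * Gamma (a + β - 1) := by
    rw [← Gamma_add_one hc.ne', sub_add_cancel]
  have hconv := Gamma_mul_add_mul_le_rpow_Gamma_mul_rpow_Gamma hc (by linarith : 0 < a + β)
    hβ0 (by linarith : 0 < 1 - β) (add_sub_cancel β 1)
  rw [show β * (a + β - 1) + (1 - β) * (a + β) = a by ring] at hconv
  have hG : 0 < Gamma (a + β - 1) := Gamma_pos_of_pos hc
  have hle : Gamma a ≤ (a + β - 1) ^ (1 - β) * Gamma (a + β - 1) :=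
    hconv.trans_eq <| by
      rw [hrec, mul_rpow hc.le hG.le, mul_left_comm, ← rpow_add hG, add_sub_cancel, rpow_one]
  calc (a + β - 1) ^ β * Gamma a
      ≤ (a + β - 1) ^ β * ((a + β - 1) ^ (1 - β) * Gamma (a + β - 1)) := by gcongr
    _ = Gamma (a + β) := by rw [← mul_assoc, ← rpow_add hc, add_sub_cancel, rpow_one, hrec]

lemma tendsto_integral_rpow_gammaMeasure_atTop (hr : 0 < r) (hβ0 : 0 < β) (hβ1 : β < 1) :
    Tendsto (fun a => ∫ x, x ^ β ∂gammaMeasure a r) atTop atTop := by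
  have hlim : Tendsto (fun a : ℝ => (a + (β - 1)) ^ β / r ^ β) atTop atTop :=
    ((tendsto_rpow_atTop hβ0).comp
      (tendsto_atTop_add_const_right _ (β - 1) tendsto_id)).atTop_div_const (by positivity)
  refine tendsto_atTop_mono' _ ?_ hlim
  filter_upwards [eventually_gt_atTop 1] with a ha
  have : 0 < Gamma a := Gamma_pos_of_pos (by linarith)
  rw [integral_rpow_gammaMeasure (by linarith) hr hβ0, div_le_div_iff₀ (by positivity)
    (by positivity), ← add_sub_assoc, ← mul_assoc]
  exact mul_le_mul_of_nonneg_right (rpow_mul_Gamma_le_Gamma_add hβ0 hβ1 (by linarith))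
    (by positivity)

end GammaMoments

section GammaLaw

variable {Ω : Type*} [MeasurableSpace Ω] {μ : Measure Ω} {X : Ω → ℝ} {a r q : ℝ}

lemma ae_pos_of_map_eq_gammaMeasure (hX : Measurable X) (hlaw : μ.map X = gammaMeasure a r) :
    ∀ᵐ ω ∂μ, 0 < X ω :=
  (ae_map_iff hX.aemeasurable measurableSet_Ioi).mp (hlaw ▸ ae_pos_gammaMeasure a r)

lemma integral_rpow_of_map_eq_gammaMeasure (hX : Measurable X)
    (hlaw : μ.map X = gammaMeasure a r) :
    ∫ ω, X ω ^ q ∂μ = ∫ x, x ^ q ∂gammaMeasure a r := by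
  rw [← hlaw, integral_map hX.aemeasurable (measurable_id'.pow_const q).aestronglyMeasurable]

lemma integrable_rpow_of_map_eq_gammaMeasure (hX : Measurable X)
    (hlaw : μ.map X = gammaMeasure a r) (ha : 0 < a) (hr : 0 < r) (hq : 0 < q) :
    Integrable (fun ω => X ω ^ q) μ :=
  (integrable_map_measure (measurable_id'.pow_const q).aestronglyMeasurable hX.aemeasurable).mp
    (hlaw ▸ integrable_rpow_gammaMeasure ha hr hq)

end GammaLaw

lemma tendsto_div_nhds_one_of_mem_Icc {ι : Type*} {l : Filter ι} {N D : ι → ℝ} {c : ℝ}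
    (hD : Tendsto D l atTop) (hN : ∀ᶠ i in l, N i ∈ Set.Icc (D i - c) (D i)) :
    Tendsto (fun i => N i / D i) l (nhds 1) := by
  have hlow : Tendsto (fun i => 1 - c / D i) l (nhds 1) := by
    simpa using tendsto_const_nhds.sub (tendsto_const_nhds.div_atTop hD)
  refine tendsto_of_tendsto_of_tendsto_of_le_of_le' hlow tendsto_const_nhds ?_ ?_ <;>
    filter_upwards [hN, hD.eventually_gt_atTop 0] with i hi hDi
  · rw [one_sub_div hDi.ne']
    exact div_le_div_of_nonneg_right hi.1 hDi.le
  · exact div_le_one_of_le₀ hi.2 hDi.le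

theorem gamma_subordinator_incBeta_joint_asymp_general {Ω : Type*} [MeasurableSpace Ω]
    (μ : Measure Ω) (Y : ℝ → Ω → ℝ) (α p β s : ℝ)
    (hα : 0 < α) (hp : 0 < p) (hβ0 : 0 < β) (hβ1 : β < 1) (hs : 0 < s)
    (hmeas : ∀ u, Measurable (Y u))
    (hmono : ∀ᵐ ω ∂μ, Monotone fun u => Y u ω)
    (hindep : ∀ u v : ℝ, 0 ≤ u → u ≤ v →
      IndepFun (Y u) (fun ω => Y v ω - Y u ω) μ)
    (hstat : ∀ u v : ℝ, 0 ≤ u → u ≤ v →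
      μ.map (fun ω => Y v ω - Y u ω) = μ.map (Y (v - u)))
    (hlaw : ∀ t : ℝ, 0 < t → μ.map (Y t) = gammaMeasure (p * t) α) :
    Tendsto (fun t : ℝ =>
        β * (∫ ω, (Y t ω) ^ (2 * β) * incBeta β (1 + β) (Y s ω / Y t ω) ∂μ) /
          (∫ ω, (Y s ω) ^ β * (Y t ω) ^ β ∂μ))
      atTop (nhds 1) := by
  have hYle : ∀ t, s ≤ t → ∀ᵐ ω ∂μ, 0 < Y s ω ∧ Y s ω ≤ Y t ω := fun t ht => by
    filter_upwards [ae_pos_of_map_eq_gammaMeasure (hmeas s) (hlaw s hs), hmono] with ω h0 hm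
    exact ⟨h0, hm ht⟩
  have hint : ∀ t, s ≤ t → Integrable (fun ω => Y t ω ^ (2 * β)) μ := fun t ht =>
    integrable_rpow_of_map_eq_gammaMeasure (hmeas t) (hlaw t (hs.trans_le ht))
      (mul_pos hp (hs.trans_le ht)) hα (by positivity)
  have hYs : 0 < ∫ ω, Y s ω ^ β ∂μ := by
    have := Gamma_pos_of_pos (mul_pos hp hs)
    have := Gamma_pos_of_pos (by positivity : 0 < p * s + β)
    rw [integral_rpow_of_map_eq_gammaMeasure (hmeas s) (hlaw s hs),
      integral_rpow_gammaMeasure (mul_pos hp hs) hα hβ0]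
    positivity
  have hmoment : Tendsto (fun t => ∫ x, x ^ β ∂gammaMeasure (p * (t - s)) α) atTop atTop :=
    (tendsto_integral_rpow_gammaMeasure_atTop hα hβ0 hβ1).comp
      ((tendsto_atTop_add_const_right _ (-s) tendsto_id).const_mul_atTop hp)
  have hD : Tendsto (fun t => ∫ ω, Y s ω ^ β * Y t ω ^ β ∂μ) atTop atTop := by
    refine tendsto_atTop_mono' _ ?_ (hmoment.const_mul_atTop hYs)
    filter_upwards [eventually_gt_atTop s] with t ht
    have hdiff : μ.map (fun ω => Y t ω - Y s ω) = gammaMeasure (p * (t - s)) α := by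
      rw [hstat s t hs.le ht.le, hlaw _ (sub_pos.2 ht)]
    rw [← integral_rpow_of_map_eq_gammaMeasure ((hmeas t).sub (hmeas s)) hdiff]
    refine integral_rpow_mul_integral_rpow_le (W := fun ω => Y t ω - Y s ω) (hmeas s)
      ((hmeas t).sub (hmeas s)) hβ0.le (hindep s t hs.le ht.le) ?_
      (integrable_rpow_mul_rpow (hmeas s) (hmeas t) hβ0.le
        ((hYle t ht.le).mono fun _ h => ⟨h.1.le, h.2⟩) (hint t ht.le))
    filter_upwards [hYle t ht.le] with ω ⟨h0, hle⟩
    exact ⟨h0.le, sub_nonneg.2 hle, by linarith⟩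
  refine tendsto_div_nhds_one_of_mem_Icc (c := (∫ ω, Y s ω ^ (2 * β) ∂μ) / 2) hD ?_
  filter_upwards [eventually_ge_atTop s] with t ht
  exact integral_rpow_mul_incBeta_div_mem (hmeas s) (hmeas t) hβ0 hβ1.le (hYle t ht) (hint t ht)

theorem gamma_subordinator_incBeta_joint_asymp {Ω : Type*} [MeasurableSpace Ω]
    (μ : Measure Ω) [IsProbabilityMeasure μ] (Y : ℝ → Ω → ℝ) (α p β s : ℝ)
    (hα : 0 < α) (hp : 0 < p) (hβ0 : 0 < β) (hβ1 : β < 1) (hs : 0 < s)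
    (hmeas : ∀ u, Measurable (Y u))
    (h0 : ∀ᵐ ω ∂μ, Y 0 ω = 0)
    (hmono : ∀ᵐ ω ∂μ, Monotone fun u => Y u ω)
    (hindep : ∀ u v : ℝ, 0 ≤ u → u ≤ v →
      IndepFun (Y u) (fun ω => Y v ω - Y u ω) μ)
    (hstat : ∀ u v : ℝ, 0 ≤ u → u ≤ v →
      μ.map (fun ω => Y v ω - Y u ω) = μ.map (Y (v - u)))
    (hlaw : ∀ t : ℝ, 0 < t → μ.map (Y t) = gammaMeasure (p * t) α) :
    Tendsto (fun t : ℝ =>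
        β * (∫ ω, (Y t ω) ^ (2 * β) * incBeta β (1 + β) (Y s ω / Y t ω) ∂μ) /
          (∫ ω, (Y s ω) ^ β * (Y t ω) ^ β ∂μ))
      atTop (nhds 1) :=
  gamma_subordinator_incBeta_joint_asymp_general μ Y α p β s hα hp hβ0 hβ1 hs hmeas hmono hindep
    hstat hlaw
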